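/- Let $\psi : \mathbb{R}^n \to \mathbb{R}$ be a convex, positively homogeneous function, increasing in each variable, with $\psi > 0$ outside $\overline{\mathbb{R}_-^n}$ (so $\psi = h_\Gamma$ for a compact convex $\Gamma \subset \overline{\mathbb{R}_+^n}$ containing a neighborhood of 0 in $\overline{\mathbb{R}_+^n}$). Then for $c > 0$, $\int_{\mathbb{R}^n} e^{-2[c\max\{\psi(t),0\} - \sum_k t_k]}\, dt < \infty$ if and only if $c \cdot \max\{\psi(t), 0\} > \sum_k t_k$ for all $t \neq 0$, equivalently if and only if the point $(1/c, \ldots, 1/c)$ lies in the interior of the indicator diagram $\Gamma^+$ of $\max\{\psi,0\}$. -/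

import Mathlib

/-!
Put `Φ t = 2 (c ψ⁺(t) - ∑ tₖ)`. It is positively homogeneous and subadditive, and continuous
because a convex function on a finite-dimensional space is. If `Φ > 0` off the origin, its minimum
on the unit sphere gives `Φ t ≥ ε ‖t‖`, and `e^{-ε ‖t‖}` is integrable. If `Φ u ≤ 0` for some
`u ≠ 0`, then `Φ (x + k u) ≤ Φ x`, so `Φ < 1` on infinitely many disjoint translates of a small ball
around `0` and the integrand stays above `e⁻¹` on a set of infinite measure.

For the indicator diagram, a point `a₀` with `⟨a₀, t⟩ ≥ ψ⁺(t)` for some `t ≠ 0` is not interior,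
since `a₀ + δ t` leaves the diagram; conversely the bound `ψ⁺(t) - ⟨a₀, t⟩ ≥ ε ‖t‖` keeps a whole
ball around `a₀` inside it.
-/

open MeasureTheory Set

section Sublinear

variable {E : Type*} [NormedAddCommGroup E] [NormedSpace ℝ E] {f : E → ℝ}

lemma map_zero_of_pos_homogeneous (hhom : ∀ c : ℝ, 0 < c → ∀ x, f (c • x) = c * f x) :
    f 0 = 0 := by
  have h := hhom 2 two_pos 0
  rw [smul_zero] at h
  linarith

lemma ConvexOn.map_add_le_of_pos_homogeneous (hconv : ConvexOn ℝ univ f)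
    (hhom : ∀ c : ℝ, 0 < c → ∀ x, f (c • x) = c * f x) (x y : E) :
    f (x + y) ≤ f x + f y := by
  have hmid := hconv.2 (mem_univ x) (mem_univ y) (by norm_num : (0 : ℝ) ≤ 1 / 2)
    (by norm_num : (0 : ℝ) ≤ 1 / 2) (by norm_num)
  rw [← smul_add, hhom _ (by norm_num), smul_eq_mul, smul_eq_mul] at hmid
  linarith

lemma exists_pos_mul_norm_le_of_pos_homogeneous [FiniteDimensional ℝ E] (hcont : Continuous f)
    (hhom : ∀ c : ℝ, 0 < c → ∀ x, f (c • x) = c * f x) (hpos : ∀ x, x ≠ 0 → 0 < f x) :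
    ∃ ε > 0, ∀ x, ε * ‖x‖ ≤ f x := by
  rcases subsingleton_or_nontrivial E with hE | hE
  · refine ⟨1, one_pos, fun x => ?_⟩
    rw [Subsingleton.elim x 0, norm_zero, mul_zero, map_zero_of_pos_homogeneous hhom]
  obtain ⟨z, hz, hmin⟩ := (isCompact_sphere (0 : E) 1).exists_isMinOn
    (NormedSpace.sphere_nonempty.mpr zero_le_one) hcont.continuousOn
  have hz1 : ‖z‖ = 1 := mem_sphere_zero_iff_norm.mp hz
  refine ⟨f z, hpos z (ne_zero_of_norm_ne_zero (by simp [hz1])), fun x => ?_⟩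
  rcases eq_or_ne x 0 with rfl | hx
  · simp [map_zero_of_pos_homogeneous hhom]
  have hnx : 0 < ‖x‖ := norm_pos_iff.mpr hx
  have hunit : ‖x‖⁻¹ • x ∈ Metric.sphere (0 : E) 1 := by
    rw [mem_sphere_zero_iff_norm, norm_smul, norm_inv, norm_norm, inv_mul_cancel₀ hnx.ne']
  calc f z * ‖x‖ ≤ f (‖x‖⁻¹ • x) * ‖x‖ := mul_le_mul_of_nonneg_right (hmin hunit) hnx.le
    _ = f x := by rw [hhom _ (inv_pos.mpr hnx)]; field_simp

end Sublinear

section HaarMeasure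

variable {E : Type*} [NormedAddCommGroup E] [MeasurableSpace E] [BorelSpace E]
  (μ : Measure E) [μ.IsAddHaarMeasure]

lemma measure_eq_top_of_ball_subset {V : Set E} {r : ℝ} (hr : 0 < r) {x : ℕ → E}
    (hsep : Pairwise fun k j => 2 * r ≤ dist (x k) (x j)) (hV : ∀ k, Metric.ball (x k) r ⊆ V) :
    μ V = ⊤ := by
  have hdisj : Pairwise (Function.onFun Disjoint fun k => Metric.ball (x k) r) :=
    fun k j hkj => Metric.ball_disjoint_ball (by linarith [hsep hkj])
  have hunion : μ (⋃ k, Metric.ball (x k) r) = ⊤ := by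
    rw [measure_iUnion hdisj fun k => measurableSet_ball]
    simp_rw [Measure.addHaar_ball_center]
    exact ENNReal.tsum_const_eq_top_of_ne_zero (Metric.measure_ball_pos μ 0 hr).ne'
  exact top_le_iff.mp (hunion ▸ measure_mono (iUnion_subset hV))

variable [NormedSpace ℝ E] {f : E → ℝ}

lemma not_integrable_exp_neg_of_nonpos (hcont : Continuous f)
    (hhom : ∀ c : ℝ, 0 < c → ∀ x, f (c • x) = c * f x) (hadd : ∀ x y, f (x + y) ≤ f x + f y)
    {u : E} (hu : u ≠ 0) (hfu : f u ≤ 0) :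
    ¬ Integrable (fun x => Real.exp (-f x)) μ := by
  intro hint
  set V : Set E := {x | f x < 1}
  have hV0 : (0 : E) ∈ V := by simp [V, map_zero_of_pos_homogeneous hhom]
  obtain ⟨r, hr, hball⟩ := Metric.isOpen_iff.mp (isOpen_lt hcont continuous_const) 0 hV0
  set v := (2 * r / ‖u‖) • u
  have hnu : 0 < ‖u‖ := norm_pos_iff.mpr hu
  have hv : ‖v‖ = 2 * r := by
    rw [norm_smul, Real.norm_of_nonneg (by positivity), div_mul_cancel₀ _ hnu.ne']
  have hfv : ∀ k : ℕ, f ((k : ℝ) • v) ≤ 0 := by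
    intro k
    rcases (Nat.cast_nonneg (α := ℝ) k).eq_or_lt with hk | hk
    · rw [← hk, zero_smul, map_zero_of_pos_homogeneous hhom]
    · rw [hhom _ hk, hhom _ (by positivity)]
      exact mul_nonpos_of_nonneg_of_nonpos hk.le (mul_nonpos_of_nonneg_of_nonpos (by positivity) hfu)
  have hsep : Pairwise fun k j : ℕ => 2 * r ≤ dist ((k : ℝ) • v) ((j : ℝ) • v) := by
    intro k j hkj
    have hkj' : (1 : ℝ) ≤ |(k : ℝ) - j| := by
      exact_mod_cast Int.one_le_abs (sub_ne_zero.mpr (Int.natCast_inj.not.mpr hkj))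
    rw [dist_eq_norm, ← sub_smul, norm_smul, Real.norm_eq_abs, hv]
    nlinarith
  have hV : ∀ k : ℕ, Metric.ball ((k : ℝ) • v) r ⊆ V := by
    intro k y hy
    have hy0 : y - (k : ℝ) • v ∈ V := hball (by rwa [mem_ball_zero_iff, ← dist_eq_norm])
    have := hadd (y - (k : ℝ) • v) ((k : ℝ) • v)
    rw [sub_add_cancel] at this
    exact lt_of_le_of_lt this (by linarith [hfv k, show f (y - (k : ℝ) • v) < 1 from hy0])
  have hVfin := hint.measure_norm_ge_lt_top (Real.exp_pos (-1))
  refine hVfin.ne (top_le_iff.mp ((measure_eq_top_of_ball_subset μ hr hsep hV).symm.le.trans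
    (measure_mono fun x hx => ?_)))
  simp only [mem_ofPred_eq, Real.norm_eq_abs, abs_of_pos (Real.exp_pos _), Real.exp_le_exp]
  exact (neg_lt_neg hx).le

variable [FiniteDimensional ℝ E]

lemma integrable_exp_neg_mul_norm {b : ℝ} (hb : 0 < b) :
    Integrable (fun x : E => Real.exp (-(b * ‖x‖))) μ := by
  rcases subsingleton_or_nontrivial E with hE | hE
  · exact .of_finite
  have hdim : 0 < Module.finrank ℝ E := Module.finrank_pos
  rw [integrable_fun_norm_addHaar μ (f := fun y => Real.exp (-(b * y)))]
  have hs : (-1 : ℝ) < Module.finrank ℝ E - 1 := by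
    linarith [(Nat.cast_pos.mpr hdim : (0 : ℝ) < Module.finrank ℝ E)]
  refine (integrableOn_rpow_mul_exp_neg_mul_rpow (p := 1) hs one_pos hb).congr_fun
    (fun y _ => ?_) measurableSet_Ioi
  simp only [Real.rpow_one, ← Real.rpow_natCast, Nat.cast_sub hdim, Nat.cast_one, smul_eq_mul,
    neg_mul]

theorem integrable_exp_neg_iff_pos (hcont : Continuous f)
    (hhom : ∀ c : ℝ, 0 < c → ∀ x, f (c • x) = c * f x) (hadd : ∀ x y, f (x + y) ≤ f x + f y) :
    Integrable (fun x => Real.exp (-f x)) μ ↔ ∀ x, x ≠ 0 → 0 < f x := by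
  refine ⟨fun hint x hx => ?_, fun hpos => ?_⟩
  · by_contra hle
    exact not_integrable_exp_neg_of_nonpos μ hcont hhom hadd hx (not_lt.mp hle) hint
  obtain ⟨ε, hε, hcoer⟩ := exists_pos_mul_norm_le_of_pos_homogeneous hcont hhom hpos
  refine (integrable_exp_neg_mul_norm μ hε).mono' (by fun_prop) (ae_of_all _ fun x => ?_)
  rw [Real.norm_of_nonneg (Real.exp_pos _).le, Real.exp_le_exp]
  exact neg_le_neg (hcoer x)

end HaarMeasure

section DotProduct

open Filter Topology

variable {ι : Type*} [Fintype ι]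

lemma abs_dotProduct_le (b t : ι → ℝ) : |b ⬝ᵥ t| ≤ Fintype.card ι * (‖b‖ * ‖t‖) := by
  calc |b ⬝ᵥ t| ≤ ∑ i, |b i * t i| := Finset.abs_sum_le_sum_abs _ _
    _ ≤ ∑ _i : ι, ‖b‖ * ‖t‖ := Finset.sum_le_sum fun i _ => by
        rw [abs_mul]
        exact mul_le_mul (norm_le_pi_norm b i) (norm_le_pi_norm t i) (abs_nonneg _) (norm_nonneg _)
    _ = Fintype.card ι * (‖b‖ * ‖t‖) := by simp

theorem mem_interior_setOf_dotProduct_le_iff {φ : (ι → ℝ) → ℝ} (hcont : Continuous φ)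
    (hhom : ∀ c : ℝ, 0 < c → ∀ x, φ (c • x) = c * φ x) (a₀ : ι → ℝ) :
    a₀ ∈ interior {a | ∀ t, a ⬝ᵥ t ≤ φ t} ↔ ∀ t, t ≠ 0 → a₀ ⬝ᵥ t < φ t := by
  constructor
  · intro h t ht
    have hnear : ∀ᶠ δ in 𝓝[>] (0 : ℝ), ∀ s, (a₀ + δ • t) ⬝ᵥ s ≤ φ s := by
      have hlim : Tendsto (fun δ : ℝ => a₀ + δ • t) (𝓝[>] 0) (𝓝 a₀) := by
        exact (Continuous.tendsto' (by fun_prop) 0 a₀ (by simp)).mono_left nhdsWithin_le_nhds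
      exact hlim.eventually (mem_interior_iff_mem_nhds.mp h)
    obtain ⟨δ, hδt, hδ⟩ := (hnear.and self_mem_nhdsWithin).exists
    have htt : 0 < t ⬝ᵥ t := lt_of_le_of_ne (Finset.sum_nonneg fun i _ => mul_self_nonneg (t i))
      (Ne.symm (dotProduct_self_eq_zero.not.mpr ht))
    have := hδt t
    rw [add_dotProduct, smul_dotProduct, smul_eq_mul] at this
    nlinarith [mul_pos (mem_Ioi.mp hδ) htt]
  · intro hlt
    obtain ⟨ε, hε, hcoer⟩ := exists_pos_mul_norm_le_of_pos_homogeneous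
      (f := fun t => φ t - a₀ ⬝ᵥ t) (by fun_prop)
      (fun c hc t => by simp only [hhom c hc, dotProduct_smul, smul_eq_mul]; ring)
      (fun t ht => sub_pos.mpr (hlt t ht))
    rw [mem_interior_iff_mem_nhds, Metric.mem_nhds_iff]
    refine ⟨ε / (Fintype.card ι + 1), by positivity, fun a ha t => ?_⟩
    rw [Metric.mem_ball, dist_eq_norm, lt_div_iff₀ (by positivity)] at ha
    have hdiff := le_abs_self ((a - a₀) ⬝ᵥ t) |>.trans (abs_dotProduct_le (a - a₀) t)
    rw [sub_dotProduct] at hdiff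
    nlinarith [hcoer t, norm_nonneg t, norm_nonneg (a - a₀)]

end DotProduct

theorem stmt13_general {n : ℕ} (ψ : (Fin n → ℝ) → ℝ)
    (hconv : ConvexOn ℝ Set.univ ψ)
    (hhom : ∀ c : ℝ, 0 < c → ∀ t, ψ (c • t) = c * ψ t)
    (c : ℝ) (hc : 0 < c) :
    (Integrable
        (fun t : Fin n → ℝ => Real.exp (-(2 * (c * max (ψ t) 0 - ∑ i, t i)))) volume ↔
      ∀ t : Fin n → ℝ, t ≠ 0 → (∑ i, t i) < c * max (ψ t) 0) ∧
    (Integrable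
        (fun t : Fin n → ℝ => Real.exp (-(2 * (c * max (ψ t) 0 - ∑ i, t i)))) volume ↔
      (fun _ : Fin n => 1 / c) ∈
        interior {a : Fin n → ℝ | ∀ t, (∑ i, a i * t i) ≤ max (ψ t) 0}) := by
  have hconv' : ConvexOn ℝ univ fun t => max (ψ t) 0 := hconv.sup (convexOn_const 0 convex_univ)
  have hhom' : ∀ r : ℝ, 0 < r → ∀ t, max (ψ (r • t)) 0 = r * max (ψ t) 0 := fun r hr t => by
    rw [hhom r hr, mul_max_of_nonneg _ _ hr.le, mul_zero]
  have hcont' : Continuous fun t => max (ψ t) 0 :=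
    continuousOn_univ.mp (hconv'.continuousOn isOpen_univ)
  have hint : Integrable (fun t : Fin n → ℝ => Real.exp (-(2 * (c * max (ψ t) 0 - ∑ i, t i))))
      volume ↔ ∀ t : Fin n → ℝ, t ≠ 0 → (∑ i, t i) < c * max (ψ t) 0 := by
    rw [integrable_exp_neg_iff_pos volume (by fun_prop)]
    · simp only [Nat.ofNat_pos, mul_pos_iff_of_pos_left, sub_pos]
    · intro r hr t
      simp only [hhom' r hr, Pi.smul_apply, smul_eq_mul, ← Finset.mul_sum]
      ring
    · intro x y
      have := hconv'.map_add_le_of_pos_homogeneous hhom' x y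
      simp only [Pi.add_apply, Finset.sum_add_distrib]
      nlinarith
  refine ⟨hint, hint.trans (Iff.symm ?_)⟩
  refine (mem_interior_setOf_dotProduct_le_iff hcont' hhom' _).trans (forall₂_congr fun t _ => ?_)
  rw [show (fun _ => 1 / c) ⬝ᵥ t = (∑ i, t i) / c by
    simp [dotProduct, div_eq_inv_mul, Finset.mul_sum], div_lt_iff₀' hc]

/-- for the convex image `ψ` of an indicator in `L*(ℂⁿ)` (convex,
positively homogeneous, increasing in each variable, positive outside `ℝ̄₋ⁿ`) and `c > 0`,
`∫_{ℝⁿ} e^{-2[c ψ⁺(t) - ∑ tₖ]} dt < ∞` iff `c ψ⁺(t) > ∑ tₖ` for all `t ≠ 0`, iff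
`(1/c)·𝟏` lies in the interior of the indicator diagram `Γ⁺ = {a | ⟨a,t⟩ ≤ ψ⁺(t) ∀t}`. -/
theorem stmt13 {n : ℕ} (ψ : (Fin n → ℝ) → ℝ)
    (hconv : ConvexOn ℝ Set.univ ψ)
    (hhom : ∀ c : ℝ, 0 < c → ∀ t, ψ (c • t) = c * ψ t)
    (hmono : ∀ s t : Fin n → ℝ, (∀ i, s i ≤ t i) → ψ s ≤ ψ t)
    (hpos : ∀ t : Fin n → ℝ, (∃ i, 0 < t i) → 0 < ψ t)
    (c : ℝ) (hc : 0 < c) :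
    (Integrable
        (fun t : Fin n → ℝ => Real.exp (-(2 * (c * max (ψ t) 0 - ∑ i, t i)))) volume ↔
      ∀ t : Fin n → ℝ, t ≠ 0 → (∑ i, t i) < c * max (ψ t) 0) ∧
    (Integrable
        (fun t : Fin n → ℝ => Real.exp (-(2 * (c * max (ψ t) 0 - ∑ i, t i)))) volume ↔
      (fun _ : Fin n => 1 / c) ∈
        interior {a : Fin n → ℝ | ∀ t, (∑ i, a i * t i) ≤ max (ψ t) 0}) :=
  stmt13_general ψ hconv hhom c hc
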